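/- Let d > 2 and n be positive integers with 4n ≥ 3(d−1)². Define f : ℤ/dℤ → ℤ/nℤ by f(j) = C(j̄, 2) mod n, where j̄ ∈ {0,…,d−1} is the canonical representative of j and C(j̄,2) = j̄(j̄−1)/2 is the binomial coefficient. Then f is differentially 1-uniform. -/
import Mathlib
set_option maxHeartbeats 2000000


/-- A function `f : G → H` between additive groups is differentially 1-uniform if for
every `(a, b) ≠ (0, 0)` the equation `f (x + a) - f x = b` has at most one solution. -/
def DiffOneUniform {G H : Type*} [AddGroup G] [AddGroup H] (f : G → H) : Prop :=
  ∀ a : G, ∀ b : H, ¬(a = 0 ∧ b = 0) →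
    ∀ x y : G, f (x + a) - f x = b → f (y + a) - f y = b → x = y

lemma two_mul_choose_two (m : ℕ) : (2 * m.choose 2 : ℤ) = m * (m - 1) := by
  induction m with
  | zero => simp
  | succ k ih =>
    have h : (k + 1).choose 2 = k.choose 1 + k.choose 2 := Nat.choose_succ_succ k 1
    rw [h]
    push_cast [Nat.choose_one_right]
    linear_combination ih

/-- For `d > 2` and `n ≥ (3/4)(d-1)²`, the map `j ↦ C(j, 2) mod n` is a differentially
1-uniform function from `ℤ/dℤ` to `ℤ/nℤ`. -/
theorem diffOneUniform_binom (d n : ℕ) (hd : 2 < d) (hn : 0 < n)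
    (hbound : 3 * (d - 1) ^ 2 ≤ 4 * n) :
    DiffOneUniform (fun j : ZMod d => ((j.val.choose 2 : ℕ) : ZMod n)) := by
  haveI : NeZero d := ⟨by omega⟩
  intro a b hab x y hx hy
  simp only at hx hy
  by_cases ha : a = 0
  · subst ha
    simp only [add_zero, sub_self] at hx
    exact absurd ⟨rfl, hx.symm⟩ hab
  -- key divisibility
  have key : (n : ℤ) ∣ (((x+a).val.choose 2 : ℤ) - (x.val.choose 2 : ℤ)
      - ((y+a).val.choose 2 : ℤ) + (y.val.choose 2 : ℤ)) := by
    rw [← ZMod.intCast_zmod_eq_zero_iff_dvd]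
    push_cast
    linear_combination hx - hy
  have key2 : (2 * (n : ℤ)) ∣ 2 * (((x+a).val.choose 2 : ℤ) - (x.val.choose 2 : ℤ)
      - ((y+a).val.choose 2 : ℤ) + (y.val.choose 2 : ℤ)) :=
    mul_dvd_mul_left 2 key
  -- integer variables and facts
  have hA1 : 0 < a.val := ZMod.val_pos.mpr ha
  have hA2 : a.val < d := ZMod.val_lt a
  have hX : x.val < d := ZMod.val_lt x
  have hY : y.val < d := ZMod.val_lt y
  have hvx : (x + a).val = (x.val + a.val) % d := ZMod.val_add x a
  have hvy : (y + a).val = (y.val + a.val) % d := ZMod.val_add y a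
  have hd' : (3 : ℤ) ≤ (d : ℤ) := by exact_mod_cast hd
  have hn' : (0 : ℤ) < (n : ℤ) := by exact_mod_cast hn
  have hbound' : 3 * ((d : ℤ) - 1) ^ 2 ≤ 4 * n := by
    have h1 : ((3 * (d - 1) ^ 2 : ℕ) : ℤ) ≤ ((4 * n : ℕ) : ℤ) := by exact_mod_cast hbound
    push_cast [Nat.cast_sub (by omega : 1 ≤ d)] at h1
    linarith
  have hA1' : (1 : ℤ) ≤ a.val := by exact_mod_cast hA1
  have hA2' : (a.val : ℤ) ≤ (d : ℤ) - 1 := by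
    have h1 : (a.val : ℤ) < d := by exact_mod_cast hA2
    linarith
  have hX' : (x.val : ℤ) ≤ (d : ℤ) - 1 := by
    have h1 : (x.val : ℤ) < d := by exact_mod_cast hX
    linarith
  have hY' : (y.val : ℤ) ≤ (d : ℤ) - 1 := by
    have h1 : (y.val : ℤ) < d := by exact_mod_cast hY
    linarith
  have hX0 : (0 : ℤ) ≤ x.val := Int.ofNat_nonneg _
  have hY0 : (0 : ℤ) ≤ y.val := Int.ofNat_nonneg _
  have e2 := two_mul_choose_two x.val
  have e4 := two_mul_choose_two y.val
  have hval : x.val = y.val := by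
    by_cases hcx : x.val + a.val < d
    · have hvx' : (x + a).val = x.val + a.val := by rw [hvx, Nat.mod_eq_of_lt hcx]
      have hcx' : (x.val : ℤ) + a.val ≤ (d : ℤ) - 1 := by
        have h1 : ((x.val + a.val : ℕ) : ℤ) < d := by exact_mod_cast hcx
        push_cast at h1; linarith
      have e1 := two_mul_choose_two ((x+a).val)
      rw [hvx'] at e1
      push_cast at e1
      rw [hvx'] at key2
      by_cases hcy : y.val + a.val < d
      · -- no wrap / no wrap
        have hvy' : (y + a).val = y.val + a.val := by rw [hvy, Nat.mod_eq_of_lt hcy]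
        have hcy' : (y.val : ℤ) + a.val ≤ (d : ℤ) - 1 := by
          have h1 : ((y.val + a.val : ℕ) : ℤ) < d := by exact_mod_cast hcy
          push_cast at h1; linarith
        have e3 := two_mul_choose_two ((y+a).val)
        rw [hvy'] at e3
        push_cast at e3
        rw [hvy'] at key2
        have hP : (2 * (((x.val + a.val).choose 2 : ℤ) - (x.val.choose 2 : ℤ)
            - ((y.val + a.val).choose 2 : ℤ) + (y.val.choose 2 : ℤ)))
            = 2 * (a.val : ℤ) * ((x.val : ℤ) - (y.val : ℤ)) := by
          linear_combination e1 - e2 - e3 + e4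
        rw [hP] at key2
        have m1 : (a.val : ℤ) * ((x.val : ℤ) - y.val) ≤ (a.val : ℤ) * ((d : ℤ) - 1 - a.val) :=
          mul_le_mul_of_nonneg_left (by linarith) (by linarith)
        have m2 : (a.val : ℤ) * ((y.val : ℤ) - x.val) ≤ (a.val : ℤ) * ((d : ℤ) - 1 - a.val) :=
          mul_le_mul_of_nonneg_left (by linarith) (by linarith)
        have hzero : 2 * (a.val : ℤ) * ((x.val : ℤ) - (y.val : ℤ)) = 0 := by
          refine Int.eq_zero_of_abs_lt_dvd key2 ?_
          clear key hx hy e1 e2 e3 e4 hP hvx hvy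
          rw [abs_lt]
          constructor <;> nlinarith [sq_nonneg ((d : ℤ) - 1 - 2 * a.val)]
        have h1 : (x.val : ℤ) = y.val := by
          rcases mul_eq_zero.mp hzero with h | h
          · linarith
          · linarith
        exact_mod_cast h1
      · -- no wrap x / wrap y : contradiction
        push_neg at hcy
        have hvy' : (y + a).val = y.val + a.val - d := by
          rw [hvy, Nat.mod_eq_sub_mod hcy, Nat.mod_eq_of_lt (by omega)]
        have hcy' : (d : ℤ) ≤ (y.val : ℤ) + a.val := by exact_mod_cast hcy
        have e3 := two_mul_choose_two ((y+a).val)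
        rw [hvy'] at e3
        push_cast [Nat.cast_sub hcy] at e3
        rw [hvy'] at key2
        have hP : (2 * (((x.val + a.val).choose 2 : ℤ) - (x.val.choose 2 : ℤ)
            - ((y.val + a.val - d).choose 2 : ℤ) + (y.val.choose 2 : ℤ)))
            = 2 * (a.val : ℤ) * x.val + (a.val : ℤ) * ((a.val : ℤ) - 1)
              + 2 * ((d : ℤ) - a.val) * y.val
              - ((d : ℤ) - a.val) * ((d : ℤ) - a.val + 1) := by
          linear_combination e1 - e2 - e3 + e4
        rw [hP] at key2
        set P : ℤ := 2 * (a.val : ℤ) * x.val + (a.val : ℤ) * ((a.val : ℤ) - 1)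
              + 2 * ((d : ℤ) - a.val) * y.val
              - ((d : ℤ) - a.val) * ((d : ℤ) - a.val + 1) with hPdef
        have m1 : 2 * (a.val : ℤ) * x.val ≤ 2 * (a.val : ℤ) * ((d : ℤ) - 1 - a.val) :=
          mul_le_mul_of_nonneg_left (by linarith) (by linarith)
        have m2 : 2 * ((d : ℤ) - a.val) * y.val ≤ 2 * ((d : ℤ) - a.val) * ((d : ℤ) - 1) :=
          mul_le_mul_of_nonneg_left (by linarith) (by linarith)
        have m3 : (0 : ℤ) ≤ 2 * (a.val : ℤ) * x.val :=
          mul_nonneg (by linarith) hX0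
        have m4 : 2 * ((d : ℤ) - a.val) * ((d : ℤ) - a.val) ≤ 2 * ((d : ℤ) - a.val) * y.val :=
          mul_le_mul_of_nonneg_left (by linarith) (by linarith)
        have hlow : 0 < P := by
          clear key key2 hx hy e1 e2 e3 e4 hP hvx hvy
          nlinarith [sq_nonneg ((a.val : ℤ) - ((d : ℤ) - a.val))]
        have hup : P < 2 * (n : ℤ) := by
          clear key key2 hx hy e1 e2 e3 e4 hP hvx hvy
          nlinarith [sq_nonneg ((d : ℤ) - 2 * a.val)]
        have hzero := Int.eq_zero_of_abs_lt_dvd key2 (by rw [abs_lt]; constructor <;> linarith)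
        exfalso; linarith
    · push_neg at hcx
      have hvx' : (x + a).val = x.val + a.val - d := by
        rw [hvx, Nat.mod_eq_sub_mod hcx, Nat.mod_eq_of_lt (by omega)]
      have hcx' : (d : ℤ) ≤ (x.val : ℤ) + a.val := by exact_mod_cast hcx
      have e1 := two_mul_choose_two ((x+a).val)
      rw [hvx'] at e1
      push_cast [Nat.cast_sub hcx] at e1
      rw [hvx'] at key2
      by_cases hcy : y.val + a.val < d
      · -- wrap x / no wrap y : contradiction
        have hvy' : (y + a).val = y.val + a.val := by rw [hvy, Nat.mod_eq_of_lt hcy]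
        have hcy' : (y.val : ℤ) + a.val ≤ (d : ℤ) - 1 := by
          have h1 : ((y.val + a.val : ℕ) : ℤ) < d := by exact_mod_cast hcy
          push_cast at h1; linarith
        have e3 := two_mul_choose_two ((y+a).val)
        rw [hvy'] at e3
        push_cast at e3
        rw [hvy'] at key2
        have hP : (2 * (((x.val + a.val - d).choose 2 : ℤ) - (x.val.choose 2 : ℤ)
            - ((y.val + a.val).choose 2 : ℤ) + (y.val.choose 2 : ℤ)))
            = -(2 * (a.val : ℤ) * y.val + (a.val : ℤ) * ((a.val : ℤ) - 1)
              + 2 * ((d : ℤ) - a.val) * x.val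
              - ((d : ℤ) - a.val) * ((d : ℤ) - a.val + 1)) := by
          linear_combination e1 - e2 - e3 + e4
        rw [hP] at key2
        set P : ℤ := 2 * (a.val : ℤ) * y.val + (a.val : ℤ) * ((a.val : ℤ) - 1)
              + 2 * ((d : ℤ) - a.val) * x.val
              - ((d : ℤ) - a.val) * ((d : ℤ) - a.val + 1) with hPdef
        have m1 : 2 * (a.val : ℤ) * y.val ≤ 2 * (a.val : ℤ) * ((d : ℤ) - 1 - a.val) :=
          mul_le_mul_of_nonneg_left (by linarith) (by linarith)
        have m2 : 2 * ((d : ℤ) - a.val) * x.val ≤ 2 * ((d : ℤ) - a.val) * ((d : ℤ) - 1) :=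
          mul_le_mul_of_nonneg_left (by linarith) (by linarith)
        have m3 : (0 : ℤ) ≤ 2 * (a.val : ℤ) * y.val :=
          mul_nonneg (by linarith) hY0
        have m4 : 2 * ((d : ℤ) - a.val) * ((d : ℤ) - a.val) ≤ 2 * ((d : ℤ) - a.val) * x.val :=
          mul_le_mul_of_nonneg_left (by linarith) (by linarith)
        have hlow : 0 < P := by
          clear key key2 hx hy e1 e2 e3 e4 hP hvx hvy
          nlinarith [sq_nonneg ((a.val : ℤ) - ((d : ℤ) - a.val))]
        have hup : P < 2 * (n : ℤ) := by
          clear key key2 hx hy e1 e2 e3 e4 hP hvx hvy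
          nlinarith [sq_nonneg ((d : ℤ) - 2 * a.val)]
        have hzero := Int.eq_zero_of_abs_lt_dvd key2 (by rw [abs_lt]; constructor <;> linarith)
        exfalso; linarith [neg_eq_zero.mp hzero]
      · -- wrap / wrap
        push_neg at hcy
        have hvy' : (y + a).val = y.val + a.val - d := by
          rw [hvy, Nat.mod_eq_sub_mod hcy, Nat.mod_eq_of_lt (by omega)]
        have hcy' : (d : ℤ) ≤ (y.val : ℤ) + a.val := by exact_mod_cast hcy
        have e3 := two_mul_choose_two ((y+a).val)
        rw [hvy'] at e3
        push_cast [Nat.cast_sub hcy] at e3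
        rw [hvy'] at key2
        have hP : (2 * (((x.val + a.val - d).choose 2 : ℤ) - (x.val.choose 2 : ℤ)
            - ((y.val + a.val - d).choose 2 : ℤ) + (y.val.choose 2 : ℤ)))
            = 2 * ((a.val : ℤ) - d) * ((x.val : ℤ) - (y.val : ℤ)) := by
          linear_combination e1 - e2 - e3 + e4
        rw [hP] at key2
        have m1 : ((d : ℤ) - a.val) * ((x.val : ℤ) - y.val) ≤ ((d : ℤ) - a.val) * ((a.val : ℤ) - 1) :=
          mul_le_mul_of_nonneg_left (by linarith) (by linarith)
        have m2 : ((d : ℤ) - a.val) * ((y.val : ℤ) - x.val) ≤ ((d : ℤ) - a.val) * ((a.val : ℤ) - 1) :=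
          mul_le_mul_of_nonneg_left (by linarith) (by linarith)
        have hzero : 2 * ((a.val : ℤ) - d) * ((x.val : ℤ) - (y.val : ℤ)) = 0 := by
          refine Int.eq_zero_of_abs_lt_dvd key2 ?_
          clear key hx hy e1 e2 e3 e4 hP hvx hvy
          rw [abs_lt]
          constructor <;> nlinarith [sq_nonneg ((d : ℤ) - 2 * a.val + 1)]
        have h1 : (x.val : ℤ) = y.val := by
          rcases mul_eq_zero.mp hzero with h | h
          · exfalso; linarith
          · linarith
        exact_mod_cast h1
  exact ZMod.val_injective d hval
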